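/- Let p, q ≥ 1 be coprime integers and let F = {(x,y) ∈ ℂ² : x^p·y^q = 1} be the Milnor fiber of f = x^p·y^q. Then F is path-connected and its fundamental group is infinite cyclic, π₁(F) ≅ ℤ; in particular the first Betti number of F equals 1. -/

import Mathlib

/-!
By Bézout, choose integers `u, v` with `u q - v p = 1`. Then `(x, y) ↦ x^u y^v` is a homeomorphism
from `F` onto `ℂ \ {0}`, with inverse `w ↦ (w^q, w^(-p))`. Composing its inverse with `exp` exhibits
`F` as the quotient of the simply connected plane `ℂ` by the free, properly discontinuous action of
`2πiℤ ≅ ℤ`, so `F` is path-connected and `π₁(F) ≅ ℤ`.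
-/

open Complex

section Bezout

variable {G₀ : Type*} [CommGroupWithZero G₀] {a b : G₀} {p q u v : ℤ}

theorem zpow_bezout_eq_left (ha : a ≠ 0) (hab : a ^ p * b ^ q = 1) (huv : u * q - v * p = 1) :
    (a ^ u * b ^ v) ^ q = a := by
  have hb : b ^ q = (a ^ p)⁻¹ := eq_inv_of_mul_eq_one_right hab
  calc (a ^ u * b ^ v) ^ q = a ^ (u * q) * (b ^ q) ^ v := by
        rw [mul_zpow, ← zpow_mul, ← zpow_mul, ← zpow_mul, mul_comm v]
    _ = a ^ (u * q - v * p) := by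
        rw [hb, inv_zpow', ← zpow_mul, sub_eq_add_neg, zpow_add₀ ha, mul_comm p, neg_mul]
    _ = a := by rw [huv, zpow_one]

theorem zpow_bezout_eq_right (hb : b ≠ 0) (hab : a ^ p * b ^ q = 1) (huv : u * q - v * p = 1) :
    (a ^ u * b ^ v) ^ (-p) = b := by
  have hba : b ^ q * a ^ p = 1 := by rw [mul_comm, hab]
  rw [zpow_neg, ← inv_zpow, mul_inv, ← zpow_neg, ← zpow_neg, mul_comm]
  exact zpow_bezout_eq_left hb hba (by linarith)

end Bezout

noncomputable def AddSubgroup.intEquivZMultiples {A : Type*} [AddGroup A] [IsAddTorsionFree A]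
    {a : A} (ha : a ≠ 0) : ℤ ≃+ AddSubgroup.zmultiples a :=
  AddMonoidHom.ofInjective (f := zmultiplesHom A a)
    (injective_zsmul_iff_not_isOfFinAddOrder.mpr (not_isOfFinAddOrder_of_isAddTorsionFree ha))

noncomputable def IsAddQuotientCoveringMap.fundamentalGroupMulEquiv {E X G : Type*}
    [TopologicalSpace E] [TopologicalSpace X] [SimplyConnectedSpace E] [AddCommGroup G]
    [AddAction G E] {p : E → X} (hp : IsAddQuotientCoveringMap p G) (x : X) :
    FundamentalGroup X x ≃* Multiplicative G :=
  (hp.fundamentalGroupEquiv ⟨_, (hp.surjective x).choose_spec⟩).trans MulOpposite.opMulEquiv.symm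

section MilnorFiber

variable {p q : ℕ} {u v : ℤ}

theorem fst_ne_zero_of_pow_mul_pow_eq_one (hp : p ≠ 0) {x y : ℂ} (h : x ^ p * y ^ q = 1) :
    x ≠ 0 :=
  (pow_ne_zero_iff hp).mp (left_ne_zero_of_mul_eq_one h)

theorem snd_ne_zero_of_pow_mul_pow_eq_one (hq : q ≠ 0) {x y : ℂ} (h : x ^ p * y ^ q = 1) :
    y ≠ 0 :=
  (pow_ne_zero_iff hq).mp (right_ne_zero_of_mul_eq_one h)

noncomputable def milnorFiberHomeomorph (hp : p ≠ 0) (hq : q ≠ 0) (huv : u * q - v * p = 1) :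
    {z : ℂ × ℂ // z.1 ^ p * z.2 ^ q = 1} ≃ₜ {w : ℂ // w ≠ 0} where
  toFun z := ⟨z.1.1 ^ u * z.1.2 ^ v, mul_ne_zero
    (zpow_ne_zero _ (fst_ne_zero_of_pow_mul_pow_eq_one hp z.2))
    (zpow_ne_zero _ (snd_ne_zero_of_pow_mul_pow_eq_one hq z.2))⟩
  invFun w := ⟨((w : ℂ) ^ (q : ℤ), (w : ℂ) ^ (-(p : ℤ))), by
    simp only [← zpow_natCast, ← zpow_mul]
    rw [← zpow_add₀ w.2]
    ring_nf
    exact zpow_zero _⟩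
  left_inv z := by
    have hz : z.1.1 ^ (p : ℤ) * z.1.2 ^ (q : ℤ) = 1 := by simpa only [zpow_natCast] using z.2
    ext
    · exact zpow_bezout_eq_left (fst_ne_zero_of_pow_mul_pow_eq_one hp z.2) hz huv
    · exact zpow_bezout_eq_right (snd_ne_zero_of_pow_mul_pow_eq_one hq z.2) hz huv
  right_inv w := by
    ext
    dsimp only
    rw [← zpow_mul, ← zpow_mul, ← zpow_add₀ w.2]
    convert zpow_one (w : ℂ) using 2
    linear_combination huv
  continuous_toFun := by
    refine Continuous.subtype_mk (Continuous.mul ?_ ?_) _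
    · exact (continuous_fst.comp continuous_subtype_val).zpow₀ u
        fun z => .inl (fst_ne_zero_of_pow_mul_pow_eq_one hp z.2)
    · exact (continuous_snd.comp continuous_subtype_val).zpow₀ v
        fun z => .inl (snd_ne_zero_of_pow_mul_pow_eq_one hq z.2)
  continuous_invFun := by
    refine Continuous.subtype_mk (Continuous.prodMk ?_ ?_) _ <;>
      exact continuous_subtype_val.zpow₀ _ fun w => .inl w.2

end MilnorFiber

theorem statement14 (p q : ℕ) (hp : 1 ≤ p) (hq : 1 ≤ q) (hpq : Nat.Coprime p q) :
    PathConnectedSpace {z : ℂ × ℂ // z.1 ^ p * z.2 ^ q = 1} ∧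
      ∀ x : {z : ℂ × ℂ // z.1 ^ p * z.2 ^ q = 1},
        Nonempty (FundamentalGroup {z : ℂ × ℂ // z.1 ^ p * z.2 ^ q = 1} x ≃*
          Multiplicative ℤ) := by
  obtain ⟨a, b, hab⟩ := Nat.isCoprime_iff_coprime.mpr hpq
  have huv : b * q - (-a) * p = 1 := by linear_combination hab
  have hcov := Complex.isAddQuotientCoveringMap_exp.homeomorph_comp
    (milnorFiberHomeomorph (by omega) (by omega) huv).symm
  refine ⟨hcov.surjective.pathConnectedSpace hcov.continuous, fun x => ⟨?_⟩⟩
  exact (hcov.fundamentalGroupMulEquiv x).trans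
    (AddEquiv.toMultiplicative (AddSubgroup.intEquivZMultiples two_pi_I_ne_zero).symm)
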